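/- arXiv:1910.06830 — 3 statements merged into one kernel-verified Lean document; each statement's English description precedes it below -/
import Mathlib

section
/- If n is relatively prime to q (equivalently, the characteristic p of F_q does not divide n), then R_n = R[x]/⟨x^n − 1⟩ is a principal ideal ring: every ideal of R_n is principal. -/
open Polynomial

noncomputable section

/-- The ambient ring `S[x]/(x^n - 1)`. -/
abbrev Amb (S : Type) [CommRing S] (n : ℕ) : Type := AdjoinRoot (X ^ n - 1 : S[X])

/-- The image of a polynomial `f ∈ S[x]` in `S[x]/(x^n - 1)`. -/
def toAmb (S : Type) [CommRing S] (n : ℕ) (f : S[X]) : Amb S n := AdjoinRoot.mk _ f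

lemma root_pow_sub_one (S : Type) [CommRing S] (n : ℕ) :
    (AdjoinRoot.root (X ^ n - 1 : S[X])) ^ n - 1 = 0 := by
  have h : (AdjoinRoot.mk (X ^ n - 1 : S[X])) (X ^ n - 1 : S[X]) = 0 := AdjoinRoot.mk_self
  simpa [map_sub, map_pow, AdjoinRoot.mk_X] using h

/-- The ring hom `S[x]/(x^n-1) → T[x]/(x^n-1)` induced by `φ : S →+* T`. -/
def liftAmb {S T : Type} [CommRing S] [CommRing T] (n : ℕ) (φ : S →+* T) :
    Amb S n →+* Amb T n :=
  AdjoinRoot.lift ((AdjoinRoot.of _).comp φ) (AdjoinRoot.root _) (by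
    have h := root_pow_sub_one T n
    simp [eval₂_sub, eval₂_pow, eval₂_one, eval₂_X, h])

/-- Reduction mod `u`: the homomorphism `π : R_n → F_q[x]/(x^n-1)` induced by
the projection `F_q + uF_q → F_q`. -/
def redMod (F : Type) [Field F] (n : ℕ) : Amb (DualNumber F) n →+* Amb F n :=
  liftAmb n (TrivSqZeroExt.fstHom F F F).toRingHom

/-- The inclusion `F_q[x]/(x^n-1) → R_n` induced by `F_q ⊆ F_q + uF_q`. -/
def emb (F : Type) [Field F] (n : ℕ) : Amb F n →+* Amb (DualNumber F) n :=
  liftAmb n (algebraMap F (DualNumber F))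

/-- The element `u` of `R_n = (F_q + uF_q)[x]/(x^n-1)`. -/
def uE (F : Type) [Field F] (n : ℕ) : Amb (DualNumber F) n :=
  AdjoinRoot.of _ (DualNumber.eps : DualNumber F)

/-- The torsion code `Tor(C) = {r ∈ F_q[x]/(x^n-1) : u·r ∈ C}` of a cyclic code
`C ⊆ R_n`. -/
def Tor (F : Type) [Field F] (n : ℕ) (C : Ideal (Amb (DualNumber F) n)) : Set (Amb F n) :=
  {r | uE F n * emb F n r ∈ C}

/-- A set of codewords (identified with residue classes in `S[x]/(x^n-1)`) is
reversible if, for each codeword with coefficient vector `(c_0, …, c_{n-1})`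
(i.e. each representative of degree `< n`), the reversed word `(c_{n-1}, …, c_0)`
is again a codeword.  Here `Polynomial.reflect (n-1)` realizes the reversal of
the coefficient vector of a polynomial of degree `< n`. -/
def ReversibleCode (S : Type) [CommRing S] (n : ℕ) (D : Set (Amb S n)) : Prop :=
  ∀ f : S[X], f.degree < (n : ℕ) → toAmb S n f ∈ D →
    toAmb S n (f.reflect (n - 1)) ∈ D

/-- The Euclidean dual code of a code `C ⊆ S[x]/(x^n-1)`: all residue classes whose
coefficient vector (of the degree `< n` representative) is orthogonal to the
coefficient vector of every codeword of `C`. -/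
def dualCode (S : Type) [CommRing S] (n : ℕ) (C : Set (Amb S n)) : Set (Amb S n) :=
  {w | ∀ wp : S[X], wp.degree < (n : ℕ) → toAmb S n wp = w →
    ∀ cp : S[X], cp.degree < (n : ℕ) → toAmb S n cp ∈ C →
      ∑ i ∈ Finset.range n, wp.coeff i * cp.coeff i = 0}

/-- The minimum Hamming distance of a code `C ⊆ S[x]/(x^n-1)`: the least Hamming
weight of (the coefficient vector of) a nonzero codeword. -/
def dH (S : Type) [CommRing S] (n : ℕ) (C : Set (Amb S n)) : ℕ :=
  sInf {d | ∃ cp : S[X], cp.degree < (n : ℕ) ∧ cp ≠ 0 ∧ toAmb S n cp ∈ C ∧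
    cp.support.card = d}

end

/-!
Since `p ∤ n`, the polynomial `x^n - 1` is separable over `F_q`, so `A = F_q[x]/(x^n - 1)` is a
reduced artinian, i.e. semisimple, ring: each of its ideals is generated by an idempotent. The map
`a + bε ↦ a + u b` identifies the dual numbers `A[ε]` with `R_n`. For an ideal `I` of `A[ε]`, let
the idempotent `e₁` generate its image under `ε ↦ 0` and the idempotent `e₀` generate the torsion
ideal `Tor(I) = {b | bε ∈ I}`. Then `e₁ ∈ Tor(I)`, so `e₁ e₀ = e₁`, and `I` is generated by
`e₁ + (e₀ - e₁)ε`.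
-/

theorem Ideal.span_pair_eq_span_singleton_add {R : Type*} [CommRing R] {x y e : R}
    (hx : x * e = x) (hy : y * e = 0) : Ideal.span {x, y} = Ideal.span {x + y} := by
  have hx' : x ∈ Ideal.span {x + y} :=
    Ideal.mem_span_singleton'.mpr ⟨e, by rw [mul_comm, add_mul, hx, hy, add_zero]⟩
  have hy' : y ∈ Ideal.span {x + y} := by
    simpa using Ideal.sub_mem _ (Ideal.mem_span_singleton_self (x + y)) hx'
  refine le_antisymm (Ideal.span_le.mpr ?_) (Ideal.span_singleton_le_iff_mem _ |>.mpr ?_)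
  · rintro _ (rfl | rfl)
    exacts [hx', hy']
  · exact Ideal.add_mem _ (Ideal.subset_span (by simp)) (Ideal.subset_span (by simp))

namespace DualNumber

open TrivSqZeroExt

variable {A : Type*} [CommRing A]

def torsionIdeal (I : Ideal A[ε]) : Ideal A := (I.restrictScalars A).comap (inrHom A A)

theorem mem_torsionIdeal {I : Ideal A[ε]} {b : A} : b ∈ torsionIdeal I ↔ inr b ∈ I := Iff.rfl

theorem map_fst_le_torsionIdeal (I : Ideal A[ε]) : I.map (fstHom ℤ A A) ≤ torsionIdeal I := by
  rw [Ideal.map_le_iff_le_comap]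
  intro x hx
  have : x * ε = inr x.fst := by ext <;> simp
  simpa [mem_torsionIdeal, this] using I.mul_mem_right ε hx

theorem inl_mem_of_mem_map_fst {I : Ideal A[ε]} {e : A} (he : IsIdempotentElem e)
    (hI : e ∈ I.map (fstHom ℤ A A)) : inl e ∈ I := by
  obtain ⟨x, hx, hxe⟩ := (Ideal.mem_map_iff_of_surjective _ fst_surjective).mp hI
  rw [fstHom_apply] at hxe
  subst hxe
  have hsnd : inr (x.snd * x.fst) ∈ I := map_fst_le_torsionIdeal I (Ideal.mul_mem_left _ _ hI)
  have : inl x.fst = x * inl x.fst - inr (x.snd * x.fst) := by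
    ext <;> simp [he.eq]
  rw [this]
  exact I.sub_mem (I.mul_mem_right _ hx) hsnd

theorem snd_mem_torsionIdeal {I : Ideal A[ε]} {x : A[ε]} (hx : x ∈ I) (hfst : inl x.fst ∈ I) :
    x.snd ∈ torsionIdeal I := by
  rw [mem_torsionIdeal]
  convert I.sub_mem hx hfst using 1
  rw [eq_sub_iff_add_eq, add_comm, inl_fst_add_inr_snd_eq]

theorem eq_span_inl_inr {I : Ideal A[ε]} {e₀ e₁ : A} (he₁ : IsIdempotentElem e₁)
    (hI₁ : I.map (fstHom ℤ A A) = Ideal.span {e₁}) (hI₀ : torsionIdeal I = Ideal.span {e₀}) :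
    I = Ideal.span {inl e₁, inr (e₀ - e₁)} := by
  have he₁I₁ : e₁ ∈ I.map (fstHom ℤ A A) := hI₁ ▸ Ideal.mem_span_singleton_self e₁
  refine le_antisymm (fun x hx => ?_) (Ideal.span_le.mpr ?_)
  · obtain ⟨c, hc⟩ := Ideal.mem_span_singleton'.mp
      (hI₁ ▸ Ideal.mem_map_of_mem (fstHom ℤ A A) hx)
    have hfst : inl x.fst = (inl c * inl e₁ : A[ε]) := by
      rw [← inl_mul, hc, fstHom_apply]
    have hsndI := snd_mem_torsionIdeal hx
      (hfst ▸ I.mul_mem_left _ (inl_mem_of_mem_map_fst he₁ he₁I₁))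
    rw [hI₀] at hsndI
    obtain ⟨d, hd⟩ := Ideal.mem_span_singleton'.mp hsndI
    have hsnd : inr x.snd = inr d * inl e₁ + inl d * inr (e₀ - e₁) := by
      ext <;> simp [← hd]
      ring
    rw [← inl_fst_add_inr_snd_eq x, hfst, hsnd]
    refine Ideal.add_mem _ (Ideal.mul_mem_left _ _ (Ideal.subset_span (by simp)))
      (Ideal.add_mem _ (Ideal.mul_mem_left _ _ (Ideal.subset_span (by simp)))
        (Ideal.mul_mem_left _ _ (Ideal.subset_span (by simp))))
  · rintro _ (rfl | rfl)
    · exact inl_mem_of_mem_map_fst he₁ he₁I₁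
    · exact mem_torsionIdeal.mp (Ideal.sub_mem _ (hI₀ ▸ Ideal.mem_span_singleton_self e₀)
        (map_fst_le_torsionIdeal I he₁I₁))

instance [IsSemisimpleRing A] : IsPrincipalIdealRing A[ε] := by
  refine ⟨fun I => ?_⟩
  obtain ⟨e₁, he₁, hI₁⟩ := IsSemisimpleRing.ideal_eq_span_idempotent (I.map (fstHom ℤ A A))
  obtain ⟨e₀, he₀, hI₀⟩ := IsSemisimpleRing.ideal_eq_span_idempotent (torsionIdeal I)
  have he₁₀ : e₁ * e₀ = e₁ := by
    obtain ⟨c, hc⟩ := Ideal.mem_span_singleton'.mp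
      (hI₀ ▸ map_fst_le_torsionIdeal I (hI₁ ▸ Ideal.mem_span_singleton_self e₁))
    rw [← hc, mul_assoc, he₀.eq]
  have hf : (e₀ - e₁) * e₁ = 0 := by rw [sub_mul, mul_comm e₀, he₁₀, he₁.eq, sub_self]
  -- the idempotent `inl e₁` fixes the first generator and kills the second
  exact ⟨_, (eq_span_inl_inr he₁ hI₁ hI₀).trans <| Ideal.span_pair_eq_span_singleton_add
    (e := inl e₁) (by simp [← inl_mul, he₁.eq]) (by ext <;> simp [hf])⟩

end DualNumber

theorem AdjoinRoot.isSemisimpleRing_of_squarefree {K : Type*} [Field K] {p : K[X]}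
    (hp : Squarefree p) : IsSemisimpleRing (AdjoinRoot p) :=
  have : IsReduced (AdjoinRoot p) :=
    (Ideal.isRadical_iff_quotient_reduced _).mp (isRadical_iff_span_singleton.mp hp.isRadical)
  have : Module.Finite K (AdjoinRoot p) := (AdjoinRoot.powerBasis hp.ne_zero).finite
  have : IsArtinianRing (AdjoinRoot p) := .of_finite K _
  IsArtinianRing.isSemisimpleRing_of_isReduced _

theorem FiniteField.natCast_ne_zero_of_coprime_card {F : Type*} [Field F] [Fintype F] {n : ℕ}
    (hn : n.Coprime (Fintype.card F)) : (n : F) ≠ 0 := fun h =>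
  CharP.ringChar_ne_one <| Nat.Coprime.eq_one_of_dvd
    (Nat.Coprime.coprime_dvd_left (ringChar.dvd h) hn)
    (ringChar.dvd (FiniteField.cast_card_eq_zero F))

open DualNumber TrivSqZeroExt

noncomputable section

variable (S : Type) [CommRing S] (n : ℕ)

theorem liftAmb_of {T : Type} [CommRing T] (φ : S →+* T) (s : S) :
    liftAmb n φ (AdjoinRoot.of _ s) = AdjoinRoot.of _ (φ s) :=
  AdjoinRoot.lift_of _

theorem liftAmb_root {T : Type} [CommRing T] (φ : S →+* T) :
    liftAmb n φ (AdjoinRoot.root _) = AdjoinRoot.root _ :=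
  AdjoinRoot.lift_root _

def dualNumberToAmb : (Amb S n)[ε] →ₐ[ℤ] Amb (DualNumber S) n :=
  DualNumber.lift ⟨((liftAmb n (algebraMap S S[ε])).toIntAlgHom, AdjoinRoot.of _ ε),
    by rw [← map_mul, eps_mul_eps, map_zero], fun _ => Commute.all _ _⟩

def ambToDualNumber : Amb (DualNumber S) n →+* (Amb S n)[ε] :=
  AdjoinRoot.lift
    (DualNumber.lift ⟨(Algebra.ofId S (Amb S n)[ε], ε), eps_mul_eps, fun _ => Commute.all _ _⟩ :
      S[ε] →ₐ[S] (Amb S n)[ε]).toRingHom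
    (inl (AdjoinRoot.root _))
    (by simpa using congrArg (inl (M := Amb S n)) (root_pow_sub_one S n))

theorem dualNumberToAmb_comp_ambToDualNumber :
    (dualNumberToAmb S n).toRingHom.comp (ambToDualNumber S n) = RingHom.id _ := by
  refine AdjoinRoot.ringHom_ext (DualNumber.ringHom_ext ?_ ?_) ?_
  · ext s
    simp [dualNumberToAmb, ambToDualNumber, algebraMap_eq_inl', AdjoinRoot.algebraMap_eq]
    exact liftAmb_of S n _ s
  · simp [dualNumberToAmb, ambToDualNumber]
  · simp [dualNumberToAmb, ambToDualNumber]
    exact liftAmb_root S n _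

theorem dualNumberToAmb_surjective : Function.Surjective (dualNumberToAmb S n) := fun c =>
  ⟨ambToDualNumber S n c, RingHom.congr_fun (dualNumberToAmb_comp_ambToDualNumber S n) c⟩

end

theorem stmt5_general {F : Type} [Field F] [Fintype F] {n : ℕ}
    (hco : Nat.Coprime n (Fintype.card F)) :
    IsPrincipalIdealRing (Amb (DualNumber F) n) := by
  have hsep : (X ^ n - 1 : F[X]).Separable :=
    X_pow_sub_one_separable_iff.mpr (FiniteField.natCast_ne_zero_of_coprime_card hco)
  have : IsSemisimpleRing (Amb F n) := AdjoinRoot.isSemisimpleRing_of_squarefree hsep.squarefree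
  exact IsPrincipalIdealRing.of_surjective _ (dualNumberToAmb_surjective F n)

/-- if `gcd(n, q) = 1` then `R_n = R[x]/(x^n - 1)` is a principal
ideal ring. -/
theorem stmt5 {F : Type} [Field F] [Fintype F] {n : ℕ} (hn : 0 < n)
    (hco : Nat.Coprime n (Fintype.card F)) :
    IsPrincipalIdealRing (Amb (DualNumber F) n) :=
  stmt5_general hco
end

section
/- Let n be odd and let C be the cyclic code of length n over R = Z_2 + uZ_2 given by C = ⟨g(x), u·a(x)⟩, where a(x), g(x) ∈ Z_2[x] with a(x) | g(x) | (x^n − 1). Then the dual code satisfies C⊥ = ⟨((x^n − 1)/a(x))*, u·((x^n − 1)/g(x))*⟩ as ideals of R_n. -/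
open Polynomial

/-!
For coefficient vectors of length `n`, `∑ vᵢ wᵢ` is the constant coefficient of
`v(x) · w(x⁻¹)` in `S[x]/(xⁿ - 1)`. A cyclic code `C` is closed under multiplication by
powers of `x`, so `C⊥` is the annihilator of `C(x⁻¹)`. For `f ∈ F[x]`, `f(x⁻¹)` is the
reciprocal `f*` times a power of `x`, a unit; hence `C⊥` is the annihilator of `⟨g*, u a*⟩`.
Writing `w = p + u q` with `p, q ∈ F[x]/(xⁿ - 1)`, `w` kills `g*` and `u a*` iff `p a* = 0`
and `q g* = 0` (as `a* ∣ g*`), i.e. iff `((xⁿ - 1)/a)* ∣ p` and `((xⁿ - 1)/g)* ∣ q`, because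
reversal is multiplicative and, in characteristic 2, fixes `xⁿ - 1`.
-/

namespace CyclicCode

open AdjoinRoot Module

noncomputable section

lemma add_sub_one_mul_mod_eq_zero_iff {n i j : ℕ} (hn : 0 < n) (hi : i < n) (hj : j < n) :
    (i + (n - 1) * j) % n = 0 ↔ i = j := by
  have hnj : (n - 1) * j + j = j * n := by
    rw [← add_one_mul, Nat.sub_one_add_one hn.ne', mul_comm]
  constructor
  · intro h
    have : i ≡ j [MOD n] :=
      calc i ≡ i + j * n [MOD n] := (Nat.add_mul_mod_self_right i j n).symm
        _ = i + (n - 1) * j + j := by rw [add_assoc, hnj]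
        _ ≡ 0 + j [MOD n] :=
          (Nat.modEq_zero_iff_dvd.mpr (Nat.dvd_of_mod_eq_zero h)).add_right j
        _ = j := zero_add j
    exact Nat.ModEq.eq_of_lt_of_lt this hi hj
  · rintro rfl
    rw [add_comm, hnj, Nat.mul_mod_left]

lemma reverse_X_pow_sub_one {S : Type} [CommRing S] (n : ℕ) :
    (X ^ n - 1 : S[X]).reverse = 1 - X ^ n := by
  nontriviality S
  have h : (X ^ n : S[X]).reverse = 1 := by simp [reverse]
  rw [sub_eq_add_neg, ← C_1, ← C_neg, reverse_add_C, h, natDegree_X_pow, C_neg, C_1,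
    neg_one_mul, ← sub_eq_add_neg]

lemma forall_mem_span_pair_mul_eq_zero {A B H : Type} [CommRing A] [CommRing B]
    [FunLike H A B] [RingHomClass H A B] (φ : H) (w : B) (s t : A) :
    (∀ c ∈ Ideal.span {s, t}, w * φ c = 0) ↔ w * φ s = 0 ∧ w * φ t = 0 := by
  refine ⟨fun h => ⟨h s (Ideal.subset_span (by simp)), h t (Ideal.subset_span (by simp))⟩, ?_⟩
  rintro ⟨hs, ht⟩ c hc
  obtain ⟨a, b, rfl⟩ := Ideal.mem_span_pair.mp hc
  rw [map_add, map_mul, map_mul]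
  linear_combination φ a * hs + φ b * ht

section Reciprocal

variable {S : Type} [CommRing S] {n : ℕ}

local notation "x" => AdjoinRoot.root (X ^ n - 1 : S[X])

lemma root_pow_eq_one : x ^ n = 1 :=
  sub_eq_zero.mp (root_pow_sub_one S n)

lemma isUnit_root (hn : 0 < n) : IsUnit x :=
  .of_pow_eq_one root_pow_eq_one hn.ne'

variable (S n) in
/-- The substitution `f(x) ↦ f(x⁻¹)`, where `x⁻¹ = x ^ (n - 1)`. -/
def substInv : Amb S n →ₐ[S] Amb S n :=
  liftAlgHom _ (Algebra.ofId S _) (x ^ (n - 1)) (by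
    rw [eval₂_sub, eval₂_X_pow, eval₂_one, ← pow_mul, mul_comm, pow_mul, root_pow_eq_one,
      one_pow, sub_self])

lemma substInv_root : substInv S n x = x ^ (n - 1) := liftAlgHom_root ..

lemma substInv_toAmb (hn : 0 < n) (f : S[X]) :
    substInv S n (toAmb S n f) = toAmb S n f.reverse * x ^ ((n - 1) * f.natDegree) := by
  let : Invertible (x ^ (n - 1)) :=
    ⟨x, by rw [← pow_succ', Nat.sub_add_cancel hn, root_pow_eq_one],
      by rw [← pow_succ, Nat.sub_add_cancel hn, root_pow_eq_one]⟩
  have h : aeval x f.reverse * (x ^ (n - 1)) ^ f.natDegree = aeval (x ^ (n - 1)) f :=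
    eval₂_reverse_mul_pow (algebraMap S _) (x ^ (n - 1)) f
  rw [aeval_eq, ← pow_mul] at h
  exact h.symm

lemma monic_X_pow_sub_one (hn : 0 < n) : (X ^ n - 1 : S[X]).Monic :=
  leadingCoeff_X_pow_sub_one hn

lemma mul_toAmb_eq_zero_iff [IsDomain S] (hn : 0 < n)
    {g h : S[X]} (hgh : g * h = X ^ n - 1) {p : Amb S n} :
    p * toAmb S n g = 0 ↔ toAmb S n h ∣ p := by
  have hg : g ≠ 0 := left_ne_zero_of_mul (hgh ▸ (monic_X_pow_sub_one hn).ne_zero)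
  obtain ⟨f, rfl⟩ := mk_surjective p
  constructor
  · intro hf
    have : g * h ∣ g * f := by
      rw [hgh, mul_comm g]
      exact mk_eq_zero.mp ((map_mul _ _ _).trans hf)
    exact _root_.map_dvd (AdjoinRoot.mk _) ((mul_dvd_mul_iff_left hg).mp this)
  · rintro ⟨s, hs⟩
    rw [hs, mul_right_comm, toAmb, toAmb, ← map_mul, mul_comm h g, hgh, mk_self, zero_mul]

end Reciprocal

section Basis

variable {S : Type} [CommRing S] [Nontrivial S] {n : ℕ}

local notation "x" => AdjoinRoot.root (X ^ n - 1 : S[X])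

lemma natDegree_X_pow_sub_one : (X ^ n - 1 : S[X]).natDegree = n := by
  simpa using natDegree_X_pow_sub_C (n := n) (r := (1 : S))

variable (S) in
def cycBasis (hn : 0 < n) : Basis (Fin n) S (Amb S n) :=
  (powerBasis' (monic_X_pow_sub_one hn)).basis.reindex (finCongr natDegree_X_pow_sub_one)

variable (hn : 0 < n)
include hn

lemma degree_X_pow_sub_one : (X ^ n - 1 : S[X]).degree = n := by
  simpa using degree_X_pow_sub_C hn (1 : S)

lemma cycBasis_apply (i : Fin n) : cycBasis S hn i = x ^ (i : ℕ) := by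
  rw [cycBasis, Basis.reindex_apply, PowerBasis.coe_basis, powerBasis'_gen]
  rfl

lemma cycBasis_repr_toAmb {f : S[X]} (hf : f.degree < n) (i : Fin n) :
    (cycBasis S hn).repr (toAmb S n f) i = f.coeff i := by
  change (modByMonicHom (monic_X_pow_sub_one hn) (mk _ f)).coeff i = _
  rw [modByMonicHom_mk, (modByMonic_eq_self_iff (monic_X_pow_sub_one hn)).mpr]
  rwa [degree_X_pow_sub_one hn]

lemma exists_toAmb_eq (w : Amb S n) : ∃ f : S[X], f.degree < n ∧ toAmb S n f = w := by
  obtain ⟨f, rfl⟩ := mk_surjective w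
  refine ⟨f %ₘ (X ^ n - 1), ?_, mk_leftInverse (monic_X_pow_sub_one hn) (mk _ f)⟩
  simpa [degree_X_pow_sub_one hn] using degree_modByMonic_lt f (monic_X_pow_sub_one hn)

lemma cycBasis_repr_root_pow (m : ℕ) :
    (cycBasis S hn).repr (x ^ m) = Finsupp.single ⟨m % n, Nat.mod_lt m hn⟩ 1 := by
  rw [pow_eq_pow_mod m root_pow_eq_one, ← cycBasis_apply hn ⟨m % n, _⟩, Basis.repr_self]

lemma toDual_cycBasis_eq_repr_mul_substInv (v w : Amb S n) :
    (cycBasis S hn).toDual v w = (cycBasis S hn).repr (v * substInv S n w) ⟨0, hn⟩ := by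
  let b := cycBasis S hn
  suffices b.toDual =
      ((LinearMap.mul S _).compl₂ (substInv S n).toLinearMap).compr₂ (b.coord ⟨0, hn⟩) from
    LinearMap.congr_fun₂ this v w
  refine LinearMap.ext_basis b b fun i j => ?_
  rw [Basis.toDual_apply]
  simp only [LinearMap.compr₂_apply, LinearMap.compl₂_apply, LinearMap.mul_apply',
    AlgHom.toLinearMap_apply, Basis.coord_apply, b, cycBasis_apply, map_pow, substInv_root,
    ← pow_mul, ← pow_add, cycBasis_repr_root_pow, Finsupp.single_apply, Fin.ext_iff,
    add_sub_one_mul_mod_eq_zero_iff hn i.2 j.2]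

lemma sum_coeff_mul_coeff_eq_toDual {f h : S[X]} (hf : f.degree < n) (hh : h.degree < n) :
    ∑ i ∈ Finset.range n, f.coeff i * h.coeff i =
      (cycBasis S hn).toDual (toAmb S n f) (toAmb S n h) := by
  let b := cycBasis S hn
  conv_rhs => rw [← b.sum_repr (toAmb S n h)]
  simp only [map_sum, map_smul, Basis.toDual_apply_left, smul_eq_mul, b,
    cycBasis_repr_toAmb hn hf, cycBasis_repr_toAmb hn hh]
  rw [← Fin.sum_univ_eq_sum_range]
  exact Finset.sum_congr rfl fun i _ => mul_comm _ _

lemma mem_dualCode_iff {C : Set (Amb S n)} {w : Amb S n} :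
    w ∈ dualCode S n C ↔ ∀ c ∈ C, (cycBasis S hn).toDual w c = 0 := by
  constructor
  · intro hw c hc
    obtain ⟨f, hf, rfl⟩ := exists_toAmb_eq hn w
    obtain ⟨h, hh, rfl⟩ := exists_toAmb_eq hn c
    rw [← sum_coeff_mul_coeff_eq_toDual hn hf hh]
    exact hw f hf rfl h hh hc
  · rintro hw f hf rfl h hh hc
    rw [sum_coeff_mul_coeff_eq_toDual hn hf hh]
    exact hw _ hc

lemma dualCode_eq_setOf_mul_substInv_eq_zero (C : Ideal (Amb S n)) :
    dualCode S n C = {w | ∀ c ∈ C, w * substInv S n c = 0} := by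
  ext w
  rw [Set.mem_ofPred_eq, mem_dualCode_iff hn]
  constructor
  · intro hw c hc
    refine (cycBasis S hn).ext_elem fun j => ?_
    rw [map_zero, Finsupp.zero_apply, ← Basis.toDual_apply_left,
      toDual_cycBasis_eq_repr_mul_substInv, mul_assoc, ← map_mul,
      ← toDual_cycBasis_eq_repr_mul_substInv]
    exact hw _ (C.mul_mem_right _ hc)
  · intro hw c hc
    rw [toDual_cycBasis_eq_repr_mul_substInv, hw c hc, map_zero, Finsupp.zero_apply]

end Basis

section DualNumber

open TrivSqZeroExt
open scoped DualNumber

variable {F : Type} [Field F] {n : ℕ}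

local notation "R" => DualNumber F

lemma emb_algebraMap (c : F) : emb F n (algebraMap F _ c) = algebraMap R _ (inl c) := by
  unfold emb liftAmb
  exact lift_of _

lemma emb_root : emb F n (root _) = root _ := by
  unfold emb liftAmb
  exact lift_root _

lemma emb_smul (c : F) (v : Amb F n) : emb F n (c • v) = (inl c : R) • emb F n v := by
  rw [Algebra.smul_def, map_mul, emb_algebraMap]
  exact (Algebra.smul_def _ _).symm

lemma uE_mul (v : Amb R n) : uE F n * v = (ε : R) • v := (Algebra.smul_def _ _).symm

lemma uE_mul_uE : uE F n * uE F n = 0 := by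
  rw [uE, ← map_mul, DualNumber.eps_mul_eps, map_zero]

lemma substInv_uE : substInv R n (uE F n) = uE F n := AlgHom.commutes _ ε

lemma substInv_emb (z : Amb F n) : substInv R n (emb F n z) = emb F n (substInv F n z) := by
  suffices (substInv R n : Amb R n →+* Amb R n).comp (emb F n) =
      (emb F n).comp (substInv F n : Amb F n →+* Amb F n) from congr($this z)
  refine AdjoinRoot.ringHom_ext (RingHom.ext fun c => ?_) ?_
  · simp [emb_algebraMap, ← AdjoinRoot.algebraMap_eq]
  · simp [emb_root, substInv_root]

variable (hn : 0 < n)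
include hn

lemma emb_cycBasis (i : Fin n) : emb F n (cycBasis F hn i) = cycBasis R hn i := by
  rw [cycBasis_apply, cycBasis_apply, map_pow, emb_root]

lemma cycBasis_repr_emb_add_uE_mul_emb (p q : Amb F n) (i : Fin n) :
    (cycBasis R hn).repr (emb F n p + uE F n * emb F n q) i =
      inl ((cycBasis F hn).repr p i) + inr ((cycBasis F hn).repr q i) := by
  have hsum : emb F n p + uE F n * emb F n q = ∑ j, (inl ((cycBasis F hn).repr p j) +
      inr ((cycBasis F hn).repr q j)) • cycBasis R hn j := by
    conv_lhs => rw [← (cycBasis F hn).sum_repr p, ← (cycBasis F hn).sum_repr q]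
    simp only [map_sum, emb_smul, emb_cycBasis hn, Finset.mul_sum, uE_mul, smul_smul,
      ← Finset.sum_add_distrib]
    refine Finset.sum_congr rfl fun j _ => ?_
    refine (add_smul (inl _ : R) _ (cycBasis R hn j)).symm.trans ?_
    congr 2
    ext <;> simp
  rw [hsum, Basis.repr_sum_self]

lemma emb_add_uE_mul_emb_eq_zero_iff {p q : Amb F n} :
    emb F n p + uE F n * emb F n q = 0 ↔ p = 0 ∧ q = 0 := by
  constructor
  · intro h
    have hi (i : Fin n) := congrArg (fun v => (cycBasis R hn).repr v i) h
    simp only [cycBasis_repr_emb_add_uE_mul_emb hn, map_zero, Finsupp.zero_apply] at hi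
    constructor <;> refine (cycBasis F hn).ext_elem fun i => ?_
    · simpa using congrArg fst (hi i)
    · simpa using congrArg snd (hi i)
  · rintro ⟨rfl, rfl⟩
    simp

lemma exists_eq_emb_add_uE_mul_emb (w : Amb R n) :
    ∃ p q : Amb F n, w = emb F n p + uE F n * emb F n q := by
  let b := cycBasis F hn
  refine ⟨b.equivFun.symm fun i => ((cycBasis R hn).repr w i).fst,
    b.equivFun.symm fun i => ((cycBasis R hn).repr w i).snd, (cycBasis R hn).ext_elem fun i => ?_⟩
  simp only [cycBasis_repr_emb_add_uE_mul_emb hn, ← Basis.equivFun_apply,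
    LinearEquiv.apply_symm_apply, b]
  exact (inl_fst_add_inr_snd_eq _).symm

lemma mem_span_emb_pair_iff {G A HG HA : Amb F n} (hG : ∀ p, p * G = 0 ↔ HG ∣ p)
    (hA : ∀ p, p * A = 0 ↔ HA ∣ p) (hAG : A ∣ G) {w : Amb R n} :
    w ∈ Ideal.span {emb F n HA, uE F n * emb F n HG} ↔
      w * emb F n G = 0 ∧ w * (uE F n * emb F n A) = 0 := by
  have hHG : emb F n HG * emb F n G = 0 := by rw [← map_mul, (hG HG).mpr dvd_rfl, map_zero]
  have hHA : emb F n HA * emb F n A = 0 := by rw [← map_mul, (hA HA).mpr dvd_rfl, map_zero]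
  have hHAG : emb F n HA * emb F n G = 0 := by
    obtain ⟨k, rfl⟩ := hAG
    rw [map_mul, ← mul_assoc, hHA, zero_mul]
  constructor
  · intro hw
    obtain ⟨r, s, rfl⟩ := Ideal.mem_span_pair.mp hw
    constructor
    · linear_combination r * hHAG + (s * uE F n) * hHG
    · linear_combination
        (r * uE F n) * hHA + (s * emb F n HG * emb F n A) * uE_mul_uE (F := F) (n := n)
  · rintro ⟨h1, h2⟩
    obtain ⟨p, q, rfl⟩ := exists_eq_emb_add_uE_mul_emb hn w
    have hG0 : p * G = 0 ∧ q * G = 0 := by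
      rw [← emb_add_uE_mul_emb_eq_zero_iff hn, map_mul, map_mul]
      linear_combination h1
    have hA0 : (0 : Amb F n) = 0 ∧ p * A = 0 := by
      rw [← emb_add_uE_mul_emb_eq_zero_iff hn, map_mul, map_zero]
      linear_combination h2 - (emb F n q * emb F n A) * uE_mul_uE (F := F) (n := n)
    obtain ⟨s, rfl⟩ := (hA p).mp hA0.2
    obtain ⟨t, rfl⟩ := (hG q).mp hG0.2
    exact Ideal.mem_span_pair.mpr ⟨emb F n s, emb F n t, by rw [map_mul, map_mul]; ring⟩

lemma mul_substInv_emb_eq_zero_iff (z : Amb R n) (f : F[X]) :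
    z * substInv R n (emb F n (toAmb F n f)) = 0 ↔ z * emb F n (toAmb F n f.reverse) = 0 := by
  rw [substInv_emb, substInv_toAmb hn, map_mul, map_pow, emb_root, ← mul_assoc,
    ((isUnit_root hn).pow _).mul_left_eq_zero]

end DualNumber

end

end CyclicCode

open CyclicCode

theorem stmt13_general {n : ℕ} (hn : 0 < n)
    (g a : (ZMod 2)[X]) (hag : a ∣ g) (hgdvd : g ∣ X ^ n - 1) :
    dualCode (DualNumber (ZMod 2)) n
      ↑(Ideal.span {emb (ZMod 2) n (toAmb (ZMod 2) n g),
        uE (ZMod 2) n * emb (ZMod 2) n (toAmb (ZMod 2) n a)})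
    = ↑(Ideal.span {emb (ZMod 2) n (toAmb (ZMod 2) n ((X ^ n - 1) / a).reverse),
        uE (ZMod 2) n * emb (ZMod 2) n (toAmb (ZMod 2) n ((X ^ n - 1) / g).reverse)}) := by
  have hrev : (X ^ n - 1 : (ZMod 2)[X]).reverse = X ^ n - 1 := by
    rw [reverse_X_pow_sub_one, ← neg_sub, CharTwo.neg_eq]
  have hfactor {f : (ZMod 2)[X]} (hf : f ∣ X ^ n - 1) :
      f.reverse * ((X ^ n - 1) / f).reverse = X ^ n - 1 := by
    rw [← reverse_mul_of_domain, EuclideanDomain.mul_div_cancel'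
      (ne_zero_of_dvd_ne_zero (monic_X_pow_sub_one hn).ne_zero hf) hf, hrev]
  have hrevdvd : a.reverse ∣ g.reverse := by
    obtain ⟨c, rfl⟩ := hag
    exact ⟨c.reverse, reverse_mul_of_domain a c⟩
  ext w
  rw [dualCode_eq_setOf_mul_substInv_eq_zero hn, Set.mem_ofPred_eq,
    forall_mem_span_pair_mul_eq_zero, SetLike.mem_coe,
    mem_span_emb_pair_iff hn (fun _ => mul_toAmb_eq_zero_iff hn (hfactor hgdvd))
      (fun _ => mul_toAmb_eq_zero_iff hn (hfactor (hag.trans hgdvd))) (map_dvd _ hrevdvd)]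
  refine and_congr (mul_substInv_emb_eq_zero_iff hn w g) ?_
  rw [map_mul, substInv_uE, ← mul_assoc, mul_substInv_emb_eq_zero_iff hn, mul_assoc]

/-- for odd `n` and `C = ⟨g(x), u·a(x)⟩` over `Z_2 + uZ_2`,
`C⊥ = ⟨((x^n-1)/a(x))*, u·((x^n-1)/g(x))*⟩`. -/
theorem stmt13 {n : ℕ} (hn : 0 < n) (hodd : Odd n)
    (g a : (ZMod 2)[X]) (hag : a ∣ g) (hgdvd : g ∣ X ^ n - 1) :
    dualCode (DualNumber (ZMod 2)) n
      ↑(Ideal.span {emb (ZMod 2) n (toAmb (ZMod 2) n g),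
        uE (ZMod 2) n * emb (ZMod 2) n (toAmb (ZMod 2) n a)})
    = ↑(Ideal.span {emb (ZMod 2) n (toAmb (ZMod 2) n ((X ^ n - 1) / a).reverse),
        uE (ZMod 2) n * emb (ZMod 2) n (toAmb (ZMod 2) n ((X ^ n - 1) / g).reverse)}) :=
  stmt13_general hn g a hag hgdvd
end

section
/- Let C = ⟨g(x) + u·p(x), u·a(x)⟩ be a cyclic code of length n over R = F_q + uF_q, where a(x), g(x), p(x) ∈ F_q[x], g(x) and a(x) are monic, a(x) | g(x) | (x^n − 1), a(x) | p(x)·((x^n − 1)/g(x)), and deg p(x) < deg a(x). Then C_u := {b(x) ∈ F_q[x]/⟨x^n − 1⟩ : u·b(x) ∈ C} = ⟨a(x)⟩, the ideal of F_q[x]/⟨x^n − 1⟩ generated by a(x). -/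
/-!
Write `u` for `ε`. Every element of `R_n` is `x + u y` with `x, y ∈ F_q[x]/(x^n - 1)`, and
`u y = 0` forces `y = 0`. If `u b = α (g + u p) + β (u a)`, expanding `α = c₀ + u c₁`,
`β = d₀ + u d₁` with `u² = 0` gives `c₀ g = 0` and `b = c₀ p + c₁ g + d₀ a`.
Since `g` divides `x^n - 1`, the annihilator of `g` is generated by `h = (x^n - 1)/g`,
so `c₀ p` is a multiple of `p h`, which `a` divides; hence `a ∣ b`.
-/

open Polynomial

open DualNumber

section DualNumberPolynomial

variable {R : Type*} [CommRing R]

theorem Polynomial.exists_eq_map_add_C_eps_mul_map (f : R[ε][X]) :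
    ∃ f₀ f₁ : R[X],
      f = f₀.map (algebraMap R R[ε]) + C ε * f₁.map (algebraMap R R[ε]) := by
  induction f using Polynomial.induction_on' with
  | add p q hp hq =>
    obtain ⟨p₀, p₁, rfl⟩ := hp
    obtain ⟨q₀, q₁, rfl⟩ := hq
    exact ⟨p₀ + q₀, p₁ + q₁, by simp only [Polynomial.map_add]; ring⟩
  | monomial i z =>
    refine ⟨monomial i z.fst, monomial i z.snd, ?_⟩
    simp only [map_monomial, C_mul_monomial]
    rw [← map_add (monomial i)]
    congr 1
    ext <;> simp [TrivSqZeroExt.algebraMap_eq_inl']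

theorem Polynomial.eq_zero_of_map_add_C_eps_mul_map_eq_zero {f₀ f₁ : R[X]}
    (h : f₀.map (algebraMap R R[ε]) + C ε * f₁.map (algebraMap R R[ε]) = 0) :
    f₀ = 0 ∧ f₁ = 0 := by
  constructor <;> ext i
  · simpa [coeff_C_mul, TrivSqZeroExt.algebraMap_eq_inl'] using
      congrArg (fun q : R[ε][X] => (q.coeff i).fst) h
  · simpa [coeff_C_mul, TrivSqZeroExt.algebraMap_eq_inl'] using
      congrArg (fun q : R[ε][X] => (q.coeff i).snd) h

end DualNumberPolynomial

theorem toAmb_dvd_of_mul_toAmb_eq_zero {S : Type} [CommRing S] [IsDomain S] {n : ℕ}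
    {g h : S[X]} (hgh : g * h = X ^ n - 1) (hg : g ≠ 0) {c : Amb S n}
    (hc : c * toAmb S n g = 0) : toAmb S n h ∣ c := by
  obtain ⟨c, rfl⟩ := AdjoinRoot.mk_surjective c
  rw [toAmb, ← map_mul, AdjoinRoot.mk_eq_zero, ← hgh, mul_comm g,
    mul_dvd_mul_iff_right hg] at hc
  exact map_dvd _ hc

theorem liftAmb_toAmb {S T : Type} [CommRing S] [CommRing T] (n : ℕ) (φ : S →+* T)
    (f : S[X]) : liftAmb n φ (toAmb S n f) = toAmb T n (f.map φ) := by
  unfold liftAmb toAmb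
  rw [AdjoinRoot.lift_mk, ← AdjoinRoot.aeval_eq, aeval_def, eval₂_map,
    AdjoinRoot.algebraMap_eq]

section DualNumberAmb

variable {F : Type} [Field F] {n : ℕ}

theorem uE_eq_toAmb : uE F n = toAmb _ n (C ε) :=
  (AdjoinRoot.mk_C _).symm

theorem uE_mul_self : uE F n * uE F n = 0 := by
  rw [uE, ← map_mul, eps_mul_eps, map_zero]

theorem redMod_uE : redMod F n (uE F n) = 0 := by
  rw [uE_eq_toAmb, redMod, liftAmb_toAmb, Polynomial.map_C]
  simp [toAmb]

theorem redMod_emb (x : Amb F n) : redMod F n (emb F n x) = x := by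
  obtain ⟨f, rfl⟩ := AdjoinRoot.mk_surjective x
  unfold emb redMod
  rw [← toAmb, liftAmb_toAmb, liftAmb_toAmb, Polynomial.map_map]
  congr
  ext
  simp

theorem exists_eq_emb_add_uE_mul_emb (z : Amb F[ε] n) :
    ∃ x y : Amb F n, z = emb F n x + uE F n * emb F n y := by
  obtain ⟨f, rfl⟩ := AdjoinRoot.mk_surjective z
  obtain ⟨f₀, f₁, rfl⟩ := exists_eq_map_add_C_eps_mul_map f
  refine ⟨toAmb F n f₀, toAmb F n f₁, ?_⟩
  unfold emb
  rw [liftAmb_toAmb, liftAmb_toAmb, uE_eq_toAmb]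
  simp only [toAmb, ← map_mul, ← map_add]

theorem eq_zero_of_uE_mul_emb_eq_zero {y : Amb F n} (hy : uE F n * emb F n y = 0) : y = 0 := by
  obtain ⟨f, rfl⟩ := AdjoinRoot.mk_surjective y
  unfold emb at hy
  rw [← toAmb, liftAmb_toAmb, uE_eq_toAmb] at hy
  simp only [toAmb, ← map_mul, AdjoinRoot.mk_eq_zero] at hy
  obtain ⟨e, he⟩ := hy
  obtain ⟨e₀, e₁, rfl⟩ := exists_eq_map_add_C_eps_mul_map e
  -- Compare the two components of `u f = (x^n - 1) (e₀ + u e₁)`.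
  have hsplit : (-((X ^ n - 1) * e₀)).map (algebraMap F F[ε])
      + C ε * (f - (X ^ n - 1) * e₁).map (algebraMap F F[ε]) = 0 := by
    simp only [Polynomial.map_neg, Polynomial.map_sub, Polynomial.map_mul, Polynomial.map_pow,
      Polynomial.map_X, Polynomial.map_one]
    linear_combination he
  rw [AdjoinRoot.mk_eq_zero]
  exact dvd_iff_exists_eq_mul_right.mpr
    ⟨e₁, sub_eq_zero.mp (eq_zero_of_map_add_C_eps_mul_map_eq_zero hsplit).2⟩

theorem eq_of_uE_mul_emb_eq {x y : Amb F n} (h : uE F n * emb F n x = uE F n * emb F n y) :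
    x = y :=
  sub_eq_zero.mp <| eq_zero_of_uE_mul_emb_eq_zero <| by rw [map_sub, mul_sub, h, sub_self]

theorem exists_of_uE_mul_emb_mem_span_pair {b x y w : Amb F n}
    (hb : uE F n * emb F n b ∈
      Ideal.span {emb F n x + uE F n * emb F n y, uE F n * emb F n w}) :
    ∃ c₀ c₁ d₀ : Amb F n, c₀ * x = 0 ∧ b = c₀ * y + c₁ * x + d₀ * w := by
  obtain ⟨α, β, hsum⟩ := Ideal.mem_span_pair.mp hb
  obtain ⟨c₀, c₁, rfl⟩ := exists_eq_emb_add_uE_mul_emb α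
  obtain ⟨d₀, d₁, rfl⟩ := exists_eq_emb_add_uE_mul_emb β
  have hexpand : uE F n * emb F n b = emb F n (c₀ * x)
      + uE F n * emb F n (c₀ * y + c₁ * x + d₀ * w) := by
    simp only [map_add, map_mul]
    linear_combination -hsum
      + (emb F n c₁ * emb F n y + emb F n d₁ * emb F n w) * (uE_mul_self : uE F n * uE F n = 0)
  have hc₀ : c₀ * x = 0 := by
    simpa [redMod_uE, redMod_emb] using (congrArg (redMod F n) hexpand).symm
  refine ⟨c₀, c₁, d₀, hc₀, eq_of_uE_mul_emb_eq ?_⟩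
  rwa [hc₀, map_zero, zero_add] at hexpand

end DualNumberAmb

theorem stmt16_general {F : Type} [Field F] {n : ℕ}
    (g a p : F[X]) (hgm : g.Monic)
    (hag : a ∣ g) (hgdvd : g ∣ X ^ n - 1)
    (hap : a ∣ p * ((X ^ n - 1) / g)) :
    Tor F n (Ideal.span {emb F n (toAmb F n g) + uE F n * emb F n (toAmb F n p),
        uE F n * emb F n (toAmb F n a)})
      = ↑(Ideal.span {toAmb F n a}) := by
  ext b
  simp only [Tor, Set.mem_ofPred_eq, SetLike.mem_coe, Ideal.mem_span_singleton]
  constructor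
  · intro hb
    obtain ⟨c₀, c₁, d₀, hc₀, rfl⟩ := exists_of_uE_mul_emb_mem_span_pair hb
    obtain ⟨k, rfl⟩ := toAmb_dvd_of_mul_toAmb_eq_zero
      (EuclideanDomain.mul_div_cancel' hgm.ne_zero hgdvd) hgm.ne_zero hc₀
    refine dvd_add (dvd_add ?_ (dvd_mul_of_dvd_right (map_dvd _ hag) _)) (dvd_mul_left _ _)
    exact (_root_.map_dvd (AdjoinRoot.mk _) hap).trans ⟨k, by unfold toAmb; rw [map_mul]; ring⟩
  · rintro ⟨r, rfl⟩
    rw [map_mul, ← mul_assoc]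
    exact Ideal.mul_mem_right _ _ (Ideal.subset_span (by simp))

/-- for `C = ⟨g(x) + u·p(x), u·a(x)⟩`, the torsion code
`C_u = {b : u·b ∈ C}` equals `⟨a(x)⟩`. -/
theorem stmt16 {F : Type} [Field F] [Fintype F] {n : ℕ} (hn : 0 < n)
    (g a p : F[X]) (hgm : g.Monic) (ham : a.Monic)
    (hag : a ∣ g) (hgdvd : g ∣ X ^ n - 1)
    (hap : a ∣ p * ((X ^ n - 1) / g))
    (hpdeg : p.degree < a.degree) :
    Tor F n (Ideal.span {emb F n (toAmb F n g) + uE F n * emb F n (toAmb F n p),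
        uE F n * emb F n (toAmb F n a)})
      = ↑(Ideal.span {toAmb F n a}) :=
  stmt16_general g a p hgm hag hgdvd hap
end
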